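/- Let m ≥ 2 be an integer and let T_m be the complete m-ary tree of depth 2: a root with m children, each child having m leaf children (so every non-root internal vertex has degree m + 1). Then tw(T_m) = 1 and cc(T_m) = m. -/

import Mathlib

/-- A tree decomposition of a finite simple graph `G`. -/
structure TreeDecomp {V : Type} [Fintype V] (G : SimpleGraph V) : Type 1 where
  ι : Type
  instFin : Fintype ι
  T : SimpleGraph ι
  isTree : T.IsTree
  bag : ι → Finset V
  bag_cover : ∀ v : V, ∃ t : ι, v ∈ bag t
  bag_edge : ∀ u v : V, G.Adj u v → ∃ t : ι, u ∈ bag t ∧ v ∈ bag t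
  bag_conn : ∀ v : V, (T.induce {t : ι | v ∈ bag t}).Connected

/-- The width of a tree decomposition: `max_t |B_t| - 1`. -/
noncomputable def TreeDecomp.width {V : Type} [Fintype V] {G : SimpleGraph V}
    (D : TreeDecomp G) : ℕ :=
  (@Finset.univ D.ι D.instFin).sup (fun t => (D.bag t).card) - 1

/-- The treewidth of a finite simple graph. -/
noncomputable def treewidth {V : Type} [Fintype V] (G : SimpleGraph V) : ℕ :=
  sInf {n : ℕ | ∃ D : TreeDecomp G, D.width = n}


/-- The degree of the merged vertex created when, after the edges in `done` (which ends with
the edge `e` just contracted) have been contracted, we count the edges of `G` not yet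
contracted having at least one endpoint in the connected component (of the spanning subgraph
with edge set `done`) containing the endpoints of `e`. -/
noncomputable def mergedDeg {V : Type} (G : SimpleGraph V) (done : List (Sym2 V))
    (e : Sym2 V) : ℕ :=
  Set.ncard {f : Sym2 V | f ∈ G.edgeSet ∧ f ∉ done ∧
    ∃ x ∈ f, ∃ y ∈ e, (SimpleGraph.fromEdgeSet {g : Sym2 V | g ∈ done}).Reachable x y}

/-- The complexity of a contraction ordering, given as a list of edges: the maximum over all
steps `i` of the degree of the vertex obtained by contracting the `i`-th edge. -/
noncomputable def listComplexity {V : Type} (G : SimpleGraph V) (l : List (Sym2 V)) : ℕ :=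
  Finset.univ.sup (fun i : Fin l.length => mergedDeg G (l.take (i + 1)) (l.get i))

/-- `l` is an ordering of the edge set of `G`. -/
def IsEdgeOrder {V : Type} (G : SimpleGraph V) (l : List (Sym2 V)) : Prop :=
  l.Nodup ∧ ∀ e : Sym2 V, e ∈ l ↔ e ∈ G.edgeSet

/-- The contraction complexity of `G`: the minimum complexity of a contraction ordering. -/
noncomputable def cc {V : Type} (G : SimpleGraph V) : ℕ :=
  sInf {n : ℕ | ∃ l : List (Sym2 V), IsEdgeOrder G l ∧ listComplexity G l = n}

/-- The vertex set of the complete `m`-ary tree of depth 2: `none` is the root,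
`some (Sum.inl i)` is the `i`-th child of the root, and `some (Sum.inr (i, j))` is the
`j`-th leaf child of the `i`-th child. -/
abbrev MAryVert (m : ℕ) : Type := Option (Fin m ⊕ Fin m × Fin m)

/-- The parent-child relation of the complete `m`-ary tree of depth 2. -/
def mAryRel (m : ℕ) : MAryVert m → MAryVert m → Prop
  | none, some (Sum.inl _) => True
  | some (Sum.inl i), some (Sum.inr p) => p.1 = i
  | _, _ => False

/-- The complete `m`-ary tree of depth 2: a root with `m` children, each child having `m`
leaf children (so every non-root internal vertex has degree `m + 1`). -/
def mAryTree (m : ℕ) : SimpleGraph (MAryVert m) := SimpleGraph.fromRel (mAryRel m)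

/-! The tree is the graph of the map sending each vertex to its parent (the root to itself), so
it has one edge `s(v, parent v)` per non-root vertex `v`. Taking the tree itself with bags
`{v, parent v}` gives width 1, and a bag containing an edge forces width at least 1.

The first contracted edge contains a child of the root, which has degree `m + 1`, so `m` other
edges leave it: `cc ≥ m`. Conversely, contract the leaf edges below the first child, then its
edge to the root, then likewise for the next child, and so on. After the `j`-th leaf edge below
child `i` the merged vertex keeps only the later leaf edges of `i` and the edge from `i` to the
root; after the edge from `i` to the root it keeps only the root edges of later children. -/

open SimpleGraph

lemma finProdFinEquiv_le_finProdFinEquiv {m n : ℕ} {q p : Fin m × Fin n} :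
    finProdFinEquiv q ≤ finProdFinEquiv p ↔ toLex q ≤ toLex p := by
  obtain ⟨⟨a, ha⟩, ⟨b, hb⟩⟩ := q
  obtain ⟨⟨a', ha'⟩, ⟨b', hb'⟩⟩ := p
  simp only [Fin.le_iff_val_le_val, finProdFinEquiv_apply_val, Prod.Lex.toLex_le_toLex,
    Fin.lt_def, Fin.mk.injEq]
  rcases lt_trichotomy a a' with h | rfl | h
  · have : n * a + n ≤ n * a' := by nlinarith
    simp only [h, true_or, iff_true]
    omega
  · simp
  · have : n * a' + n ≤ n * a := by nlinarith
    simp only [h.not_gt, h.ne', false_and, or_self, iff_false]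
    omega

lemma List.mem_take_succ_ofFn {α : Type*} {n : ℕ} {f : Fin n → α} {k : Fin n} {a : α} :
    a ∈ (List.ofFn f).take (k + 1) ↔ ∃ k', k' ≤ k ∧ f k' = a := by
  simp only [List.mem_take_iff_getElem, List.length_ofFn, lt_min_iff, List.getElem_ofFn,
    Fin.le_def]
  constructor
  · rintro ⟨j, ⟨hjk, hjn⟩, rfl⟩
    exact ⟨⟨j, hjn⟩, Nat.lt_succ_iff.1 hjk, rfl⟩
  · rintro ⟨k', hk', rfl⟩
    exact ⟨k', ⟨by omega, k'.2⟩, rfl⟩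

lemma SimpleGraph.Reachable.mem_of_closed {V : Type*} {H : SimpleGraph V} {C : Set V}
    (hC : ∀ a b, H.Adj a b → a ∈ C → b ∈ C) {x y : V} (hxy : H.Reachable x y)
    (hy : y ∈ C) : x ∈ C := by
  obtain ⟨w⟩ := hxy
  induction w with
  | nil => exact hy
  | cons h _ ih => exact hC _ _ h.symm (ih hy)

lemma SimpleGraph.induce_connected_of_forall_adj {V : Type*} {H : SimpleGraph V} {S : Set V}
    {c : V} (hc : c ∈ S) (h : ∀ x ∈ S, x ≠ c → H.Adj x c) : (H.induce S).Connected := by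
  have hcenter (x : S) : (H.induce S).Reachable x ⟨c, hc⟩ := by
    by_cases hx : x.1 = c
    · exact (Subtype.ext hx : x = ⟨c, hc⟩) ▸ Reachable.refl _
    · exact (show (H.induce S).Adj x ⟨c, hc⟩ from h x x.2 hx).reachable
  have : Nonempty S := ⟨⟨c, hc⟩⟩
  exact ⟨fun x y => (hcenter x).trans (hcenter y).symm⟩

section ParentGraph

variable {V : Type*} (p : V → V)

def parentGraph : SimpleGraph V := SimpleGraph.fromRel fun u v => u = p v

variable {p}

lemma parentGraph_adj {u v : V} : (parentGraph p).Adj u v ↔ u ≠ v ∧ (u = p v ∨ v = p u) :=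
  fromRel_adj _ u v

lemma parentGraph_adj_parent {v : V} (hv : p v ≠ v) : (parentGraph p).Adj v (p v) :=
  parentGraph_adj.2 ⟨hv.symm, Or.inr rfl⟩

lemma mem_edgeSet_parentGraph {e : Sym2 V} :
    e ∈ (parentGraph p).edgeSet ↔ ∃ v, p v ≠ v ∧ s(v, p v) = e := by
  induction e using Sym2.ind with
  | _ u v =>
    rw [mem_edgeSet, parentGraph_adj]
    constructor
    · rintro ⟨huv, rfl | rfl⟩
      · exact ⟨v, huv, Sym2.eq_swap⟩
      · exact ⟨u, huv.symm, rfl⟩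
    · rintro ⟨w, hw, he⟩
      rcases Sym2.eq_iff.1 he with ⟨rfl, rfl⟩ | ⟨rfl, rfl⟩
      exacts [⟨hw.symm, Or.inr rfl⟩, ⟨hw, Or.inl rfl⟩]

lemma parentGraph_reachable_iterate (v : V) (n : ℕ) : (parentGraph p).Reachable v (p^[n] v) := by
  induction n with
  | zero => rfl
  | succ n ih =>
    rw [Function.iterate_succ_apply']
    by_cases h : p (p^[n] v) = p^[n] v
    · rwa [h]
    · exact ih.trans (parentGraph_adj_parent h).reachable

lemma parentGraph_connected (r : V) (hr : ∀ v, ∃ n, p^[n] v = r) :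
    (parentGraph p).Connected := by
  have hroot (v : V) : (parentGraph p).Reachable v r := by
    obtain ⟨n, hn⟩ := hr v
    exact hn ▸ parentGraph_reachable_iterate v n
  have : Nonempty V := ⟨r⟩
  exact ⟨fun u v => (hroot u).trans (hroot v).symm⟩

/-- Every edge is `s(v, p v)` for some `v ≠ r`, so there are fewer edges than vertices. -/
lemma parentGraph_isTree [Finite V] (r : V) (hfix : p r = r) (hr : ∀ v, ∃ n, p^[n] v = r) :
    (parentGraph p).IsTree := by
  refine isTree_iff_connected_and_card.2 ⟨parentGraph_connected r hr, ?_⟩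
  have hsub : (parentGraph p).edgeSet ⊆ (fun v => s(v, p v)) '' {r}ᶜ := by
    intro e he
    obtain ⟨v, hv, rfl⟩ := mem_edgeSet_parentGraph.1 he
    exact ⟨v, fun h => hv (by rw [Set.mem_singleton_iff.1 h, hfix]), rfl⟩
  have hcard : (parentGraph p).edgeSet.ncard + 1 ≤ Nat.card V := by
    calc (parentGraph p).edgeSet.ncard + 1 ≤ ({r}ᶜ : Set V).ncard + 1 :=
          Nat.add_le_add_right ((Set.ncard_le_ncard hsub).trans Set.ncard_image_le) 1
      _ = Nat.card V := by
          rw [Set.ncard_compl, Set.ncard_singleton]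
          have : 0 < Nat.card V := Nat.card_pos_iff.2 ⟨⟨r⟩, inferInstance⟩
          omega
  rw [← Nat.card_coe_set_eq] at hcard
  exact le_antisymm hcard (parentGraph_connected r hr).card_vert_le_card_edgeSet_add_one

end ParentGraph

section TreeDecomposition

variable {V : Type} [Fintype V] {G : SimpleGraph V}

lemma TreeDecomp.one_le_width (D : TreeDecomp G) {u v : V} (huv : G.Adj u v) : 1 ≤ D.width := by
  obtain ⟨t, hu, hv⟩ := D.bag_edge u v huv
  let := D.instFin
  have h2 : 2 ≤ (D.bag t).card := Finset.one_lt_card.2 ⟨u, hu, v, hv, huv.ne⟩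
  have := h2.trans (Finset.le_sup (f := fun t => (D.bag t).card) (Finset.mem_univ t))
  unfold TreeDecomp.width
  omega

lemma treewidth_eq_of_width_eq (D : TreeDecomp G) {k : ℕ} (hD : D.width = k)
    (h : ∀ D' : TreeDecomp G, k ≤ D'.width) : treewidth G = k :=
  le_antisymm (Nat.sInf_le ⟨D, hD⟩) <|
    le_csInf ⟨k, D, hD⟩ fun _ ⟨D', hD'⟩ => hD' ▸ h D'

def TreeDecomp.ofParentGraph [DecidableEq V] (p : V → V) (hp : (parentGraph p).IsTree) :
    TreeDecomp (parentGraph p) where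
  ι := V
  instFin := inferInstance
  T := parentGraph p
  isTree := hp
  bag v := {v, p v}
  bag_cover v := ⟨v, Finset.mem_insert_self _ _⟩
  bag_edge u v huv := by
    rcases (parentGraph_adj.1 huv).2 with rfl | rfl
    · exact ⟨v, by simp⟩
    · exact ⟨u, by simp⟩
  bag_conn v := by
    refine induce_connected_of_forall_adj (c := v) (by simp) fun x hx hxv => ?_
    have hpx : p x = v := by simpa [Ne.symm hxv, eq_comm] using hx
    exact hpx ▸ parentGraph_adj_parent (hpx ▸ hxv.symm)

lemma TreeDecomp.width_ofParentGraph [DecidableEq V] (p : V → V) (hp : (parentGraph p).IsTree)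
    {r : V} (hr : p r ≠ r) : (TreeDecomp.ofParentGraph p hp).width = 1 := by
  have hsup : Finset.univ.sup (fun v => ({v, p v} : Finset V).card) = 2 :=
    le_antisymm (Finset.sup_le fun v _ => Finset.card_le_two) <|
      (Finset.card_pair hr.symm).symm.le.trans <|
        Finset.le_sup (f := fun v => ({v, p v} : Finset V).card) (Finset.mem_univ r)
  exact congrArg (· - 1) hsup

lemma treewidth_parentGraph (p : V → V) (hp : (parentGraph p).IsTree) {r : V} (hr : p r ≠ r) :
    treewidth (parentGraph p) = 1 := by
  classical
  exact treewidth_eq_of_width_eq _ (TreeDecomp.width_ofParentGraph p hp hr)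
    fun D => D.one_le_width (parentGraph_adj_parent hr)

end TreeDecomposition

section ContractionComplexity

variable {V : Type} {G : SimpleGraph V}

lemma cc_eq_of_isEdgeOrder {l : List (Sym2 V)} {k : ℕ} (hl : IsEdgeOrder G l)
    (hle : listComplexity G l ≤ k)
    (hge : ∀ l', IsEdgeOrder G l' → k ≤ listComplexity G l') :
    cc G = k := by
  refine le_antisymm ((Nat.sInf_le ?_).trans hle) (le_csInf ⟨_, l, hl, rfl⟩ ?_)
  · exact ⟨l, hl, rfl⟩
  · rintro _ ⟨l', hl', rfl⟩
    exact hge l' hl'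

/-- The component of `e` in the contracted edges lies inside `C`. -/
lemma mergedDeg_le_card {done : List (Sym2 V)} {e : Sym2 V} (C : Set V) (S : Finset (Sym2 V))
    (heC : ∀ y ∈ e, y ∈ C) (hC : ∀ a b, s(a, b) ∈ done → a ∈ C → b ∈ C)
    (hS : ∀ f ∈ G.edgeSet, f ∉ done → (∃ x ∈ f, x ∈ C) → f ∈ S) :
    mergedDeg G done e ≤ S.card := by
  rw [← Set.ncard_coe_finset]
  refine Set.ncard_le_ncard ?_ S.finite_toSet
  rintro f ⟨hf, hfd, x, hxf, y, hye, hxy⟩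
  refine hS f hf hfd ⟨x, hxf, hxy.mem_of_closed (fun a b hab => hC a b ?_) (heC y hye)⟩
  exact (fromEdgeSet_adj _).1 hab |>.1

lemma le_listComplexity_of_ncard_incidenceSet [Finite V] {l : List (Sym2 V)} {k : ℕ}
    (hl : IsEdgeOrder G l) {e₀ : Sym2 V} (he₀ : e₀ ∈ G.edgeSet)
    (h : ∀ e ∈ G.edgeSet, ∃ u ∈ e, k + 1 ≤ (G.incidenceSet u).ncard) :
    k ≤ listComplexity G l := by
  cases l with
  | nil => exact absurd ((hl.2 e₀).2 he₀) List.not_mem_nil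
  | cons e l =>
    have he : e ∈ G.edgeSet := (hl.2 e).1 List.mem_cons_self
    obtain ⟨u, hue, hu⟩ := h e he
    have hsub : G.incidenceSet u \ {e} ⊆
        {f | f ∈ G.edgeSet ∧ f ∉ [e] ∧ ∃ x ∈ f, ∃ y ∈ e,
          (SimpleGraph.fromEdgeSet {g | g ∈ [e]}).Reachable x y} := by
      rintro f ⟨⟨hf, huf⟩, hfe⟩
      exact ⟨hf, by simpa using hfe, u, huf, u, hue, Reachable.refl _⟩
    calc k ≤ (G.incidenceSet u).ncard - 1 := by omega
      _ ≤ (G.incidenceSet u \ {e}).ncard := Set.pred_ncard_le_ncard_sdiff_singleton _ _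
      _ ≤ mergedDeg G [e] e := Set.ncard_le_ncard hsub (Set.toFinite _)
      _ ≤ listComplexity G (e :: l) :=
        Finset.le_sup (f := fun i : Fin (e :: l).length =>
          mergedDeg G ((e :: l).take (i + 1)) ((e :: l).get i)) (Finset.mem_univ 0)

end ContractionComplexity

section MAryTree

variable {m : ℕ}

def mAryParent : MAryVert m → MAryVert m
  | some (Sum.inr (i, _)) => some (Sum.inl i)
  | _ => none

lemma mAryTree_eq_parentGraph (m : ℕ) : mAryTree m = parentGraph mAryParent := by
  ext u v
  rw [mAryTree, parentGraph, fromRel_adj, fromRel_adj]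
  rcases u with _ | i | ⟨i, j⟩ <;> rcases v with _ | i' | ⟨i', j'⟩ <;>
    simp [mAryRel, mAryParent, eq_comm]

lemma mAryTree_isTree (m : ℕ) : (mAryTree m).IsTree := by
  rw [mAryTree_eq_parentGraph]
  exact parentGraph_isTree none rfl fun v => ⟨2, by rcases v with _ | _ | ⟨_, _⟩ <;> rfl⟩

lemma treewidth_mAryTree (hm : 0 < m) : treewidth (mAryTree m) = 1 := by
  have htree := mAryTree_isTree m
  rw [mAryTree_eq_parentGraph] at htree ⊢
  exact treewidth_parentGraph _ htree (r := some (Sum.inl ⟨0, hm⟩)) (by simp [mAryParent])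

/-- The non-root vertices, indexed so that position `(i, j)` with `j < m` is the `j`-th leaf
below the `i`-th child and position `(i, m)` is that child itself. -/
def mAryVertAt (q : Fin m × Fin (m + 1)) : MAryVert m :=
  some (Fin.lastCases (Sum.inl q.1) (fun j => Sum.inr (q.1, j)) q.2)

def mAryEdgeAt (q : Fin m × Fin (m + 1)) : Sym2 (MAryVert m) :=
  s(mAryVertAt q, mAryParent (mAryVertAt q))

@[simp] lemma mAryVertAt_last (i : Fin m) : mAryVertAt (i, Fin.last m) = some (Sum.inl i) := by
  simp [mAryVertAt]

@[simp] lemma mAryVertAt_castSucc (i j : Fin m) :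
    mAryVertAt (i, j.castSucc) = some (Sum.inr (i, j)) := by
  simp [mAryVertAt]

lemma mAryEdgeAt_injective : Function.Injective (mAryEdgeAt (m := m)) := by
  rintro ⟨i, r⟩ ⟨i', r'⟩ h
  induction r using Fin.lastCases <;> induction r' using Fin.lastCases <;>
    simp_all [mAryEdgeAt, mAryParent]

lemma mem_edgeSet_mAryTree {e : Sym2 (MAryVert m)} :
    e ∈ (mAryTree m).edgeSet ↔ ∃ q, mAryEdgeAt q = e := by
  rw [mAryTree_eq_parentGraph, mem_edgeSet_parentGraph]
  constructor
  · rintro ⟨_ | i | ⟨i, j⟩, hv, rfl⟩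
    · exact absurd rfl hv
    · exact ⟨(i, Fin.last m), by simp [mAryEdgeAt]⟩
    · exact ⟨(i, j.castSucc), by simp [mAryEdgeAt]⟩
  · rintro ⟨⟨i, r⟩, rfl⟩
    refine ⟨_, ?_, rfl⟩
    induction r using Fin.lastCases <;> simp [mAryParent]

lemma inl_mem_mAryEdgeAt (q : Fin m × Fin (m + 1)) : some (Sum.inl q.1) ∈ mAryEdgeAt q := by
  obtain ⟨i, r⟩ := q
  induction r using Fin.lastCases <;> simp [mAryEdgeAt, mAryParent]

lemma le_ncard_incidenceSet_mAryTree (i : Fin m) :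
    m + 1 ≤ ((mAryTree m).incidenceSet (some (Sum.inl i))).ncard := by
  have h := Set.ncard_le_ncard_of_injOn (s := Set.univ)
    (t := (mAryTree m).incidenceSet (some (Sum.inl i))) (fun r => mAryEdgeAt (i, r))
    (fun r _ => ⟨mem_edgeSet_mAryTree.2 ⟨_, rfl⟩, inl_mem_mAryEdgeAt (i, r)⟩)
    (fun r _ r' _ h => congrArg Prod.snd (mAryEdgeAt_injective h))
  simpa using h

lemma le_listComplexity_mAryTree (hm : 0 < m) {l : List (Sym2 (MAryVert m))}
    (hl : IsEdgeOrder (mAryTree m) l) : m ≤ listComplexity (mAryTree m) l :=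
  le_listComplexity_of_ncard_incidenceSet hl (mem_edgeSet_mAryTree.2 ⟨(⟨0, hm⟩, 0), rfl⟩)
    fun _ he => by
      obtain ⟨q, rfl⟩ := mem_edgeSet_mAryTree.1 he
      exact ⟨_, inl_mem_mAryEdgeAt q, le_ncard_incidenceSet_mAryTree q.1⟩

end MAryTree

section MAryContractionOrder

variable {m : ℕ}

/-- Contract child by child: the `m` leaf edges below child `i`, then the edge from child `i`
to the root. -/
def mAryContractionOrder (m : ℕ) : List (Sym2 (MAryVert m)) :=
  List.ofFn fun k => mAryEdgeAt (finProdFinEquiv.symm k)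

lemma isEdgeOrder_mAryContractionOrder : IsEdgeOrder (mAryTree m) (mAryContractionOrder m) := by
  refine ⟨List.nodup_ofFn.2 (mAryEdgeAt_injective.comp finProdFinEquiv.symm.injective),
    fun e => ?_⟩
  rw [mAryContractionOrder, List.mem_ofFn, mem_edgeSet_mAryTree]
  exact (finProdFinEquiv.symm.surjective.exists (p := fun q => mAryEdgeAt q = e)).symm

lemma mem_take_mAryContractionOrder {p : Fin m × Fin (m + 1)} {g : Sym2 (MAryVert m)} :
    g ∈ (mAryContractionOrder m).take (finProdFinEquiv p + 1) ↔
      ∃ q, toLex q ≤ toLex p ∧ mAryEdgeAt q = g := by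
  rw [mAryContractionOrder, List.mem_take_succ_ofFn, finProdFinEquiv.symm.exists_congr_left]
  simp [finProdFinEquiv_le_finProdFinEquiv]

lemma mergedDeg_mAryContractionOrder_le (p : Fin m × Fin (m + 1)) (C : Set (MAryVert m))
    (P : Finset (Fin m × Fin (m + 1)))
    (hpC : mAryVertAt p ∈ C ∧ mAryParent (mAryVertAt p) ∈ C)
    (hC : ∀ q, toLex q ≤ toLex p → (mAryVertAt q ∈ C ↔ mAryParent (mAryVertAt q) ∈ C))
    (hP : ∀ q, toLex p < toLex q →
      (mAryVertAt q ∈ C ∨ mAryParent (mAryVertAt q) ∈ C) → q ∈ P) :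
    mergedDeg (mAryTree m) ((mAryContractionOrder m).take (finProdFinEquiv p + 1))
      (mAryEdgeAt p) ≤ P.card := by
  refine (mergedDeg_le_card C (P.image mAryEdgeAt) ?_ ?_ ?_).trans Finset.card_image_le
  · rintro y hy
    rcases Sym2.mem_iff.1 hy with rfl | rfl
    exacts [hpC.1, hpC.2]
  · intro a b hab
    obtain ⟨q, hq, he⟩ := mem_take_mAryContractionOrder.1 hab
    rcases Sym2.eq_iff.1 he with ⟨rfl, rfl⟩ | ⟨rfl, rfl⟩
    exacts [(hC q hq).1, (hC q hq).2]
  · rintro f hf hfd ⟨x, hxf, hxC⟩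
    obtain ⟨q, rfl⟩ := mem_edgeSet_mAryTree.1 hf
    have hpq : toLex p < toLex q :=
      not_le.1 fun hq => hfd (mem_take_mAryContractionOrder.2 ⟨q, hq, rfl⟩)
    refine Finset.mem_image_of_mem _ (hP q hpq ?_)
    rcases Sym2.mem_iff.1 hxf with rfl | rfl
    exacts [Or.inl hxC, Or.inr hxC]

lemma mergedDeg_mAryContractionOrder_leaf_le (i j : Fin m) :
    mergedDeg (mAryTree m) ((mAryContractionOrder m).take (finProdFinEquiv (i, j.castSucc) + 1))
      (mAryEdgeAt (i, j.castSucc)) ≤ m := by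
  refine (mergedDeg_mAryContractionOrder_le (i, j.castSucc)
    {v | v = some (Sum.inl i) ∨ ∃ j', j' ≤ j ∧ v = some (Sum.inr (i, j'))}
    ((Finset.Ioi j.castSucc).image (i, ·)) ?_ ?_ ?_).trans ?_
  · simp [mAryParent]
  · rintro ⟨i', r⟩ hq
    induction r using Fin.lastCases <;>
    · simp [mAryParent, Prod.Lex.toLex_le_toLex] at hq ⊢
      omega
  · rintro ⟨i', r⟩ hq hqC
    induction r using Fin.lastCases <;>
    · simp [mAryParent, Prod.Lex.toLex_lt_toLex] at hq hqC ⊢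
      omega
  · refine Finset.card_image_le.trans ?_
    rw [Fin.card_Ioi]
    omega

lemma mergedDeg_mAryContractionOrder_root_le (i : Fin m) :
    mergedDeg (mAryTree m) ((mAryContractionOrder m).take (finProdFinEquiv (i, Fin.last m) + 1))
      (mAryEdgeAt (i, Fin.last m)) ≤ m := by
  refine (mergedDeg_mAryContractionOrder_le (i, Fin.last m)
    {v | v = none ∨
      ∃ i', i' ≤ i ∧ (v = some (Sum.inl i') ∨ ∃ j, v = some (Sum.inr (i', j)))}
    ((Finset.Ioi i).image (·, Fin.last m)) ?_ ?_ ?_).trans ?_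
  · simp [mAryParent]
  · rintro ⟨i', r⟩ hq
    induction r using Fin.lastCases with
    | last =>
      simp [mAryParent, Prod.Lex.toLex_le_toLex] at hq ⊢
      omega
    | cast j' => simp [mAryParent]
  · rintro ⟨i', r⟩ hq hqC
    induction r using Fin.lastCases <;>
    · simp [mAryParent, Prod.Lex.toLex_lt_toLex, not_lt.2 (Fin.le_last _)] at hq hqC ⊢
      omega
  · refine Finset.card_image_le.trans ?_
    rw [Fin.card_Ioi]
    omega

lemma listComplexity_mAryContractionOrder_le :
    listComplexity (mAryTree m) (mAryContractionOrder m) ≤ m := by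
  refine Finset.sup_le fun k _ => ?_
  set p := finProdFinEquiv.symm (k.cast (List.length_ofFn))
  have hk : (k : ℕ) = finProdFinEquiv p := by simp only [p, Equiv.apply_symm_apply]; rfl
  have hget : (mAryContractionOrder m).get k = mAryEdgeAt p := by
    rw [List.get_eq_getElem]
    exact List.getElem_ofFn _
  rw [hget, hk]
  obtain ⟨i, r⟩ := p
  induction r using Fin.lastCases with
  | last => exact mergedDeg_mAryContractionOrder_root_le i
  | cast j => exact mergedDeg_mAryContractionOrder_leaf_le i j

lemma cc_mAryTree (hm : 0 < m) : cc (mAryTree m) = m :=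
  cc_eq_of_isEdgeOrder isEdgeOrder_mAryContractionOrder listComplexity_mAryContractionOrder_le
    fun _ hl => le_listComplexity_mAryTree hm hl

end MAryContractionOrder

/-- For `m ≥ 2`, the complete `m`-ary tree of depth 2 has treewidth 1
and contraction complexity `m`. -/
theorem treewidth_and_cc_mAryTree (m : ℕ) (hm : 2 ≤ m) :
    treewidth (mAryTree m) = 1 ∧ cc (mAryTree m) = m :=
  ⟨treewidth_mAryTree (by omega), cc_mAryTree (by omega)⟩
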